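/- At the triple phase coincidence event of Θ_{1\bar1}, Θ_{\bar11}, Θ_{11} (occurring at time t = −ℓ/(2p_1p_2(p_2+p_1))), one has Θ_{11} − Θ_{\bar1\bar1} = 2ℓ > 0; hence this triple event is visible. Similarly, at the triple coincidence of Θ_{\bar1\bar1}, Θ_{1\bar1}, Θ_{\bar11} at time t = ℓ/(2p_1p_2(p_2+p_1)), one has Θ_{\bar1\bar1} − Θ_{11} = 2ℓ > 0. -/

import Mathlib

open Real

noncomputable def θ (p x t : ℝ) : ℝ := p * (x + p^2 * t)

noncomputable def Θmm (p₁ p₂ x t : ℝ) : ℝ := -θ p₁ x t - θ p₂ x t + Real.log (p₂ - p₁)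
noncomputable def Θpm (p₁ p₂ x t : ℝ) : ℝ := θ p₁ x t - θ p₂ x t + Real.log (p₁ + p₂)
noncomputable def Θmp (p₁ p₂ x t : ℝ) : ℝ := -θ p₁ x t + θ p₂ x t + Real.log (p₁ + p₂)
noncomputable def Θpp (p₁ p₂ x t : ℝ) : ℝ := θ p₁ x t + θ p₂ x t + Real.log (p₂ - p₁)

noncomputable def ℓ (p₁ p₂ : ℝ) : ℝ := Real.log ((p₂ + p₁) / (p₂ - p₁))

/-!
Equality of `Θ_{1\bar1}` and `Θ_{\bar11}` says `θ₁ = θ₂`, which pins `x` on the line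
`x = -(p₁² + p₁p₂ + p₂²) t` and makes `θ₁ = -p₁p₂(p₁ + p₂) t`. Each remaining phase
difference with a neighbour is `2θ₁ ∓ ℓ`, so the third equality fixes `2θ₁ = ±ℓ`, hence `t`,
and the outer difference `±2(θ₁ + θ₂) = 4|θ₁|` equals `2ℓ`, positive because `p₂ + p₁ > p₂ - p₁`.
-/

theorem ℓ_eq_log_sub_log {p₁ p₂ : ℝ} (hs : p₂ + p₁ ≠ 0) (hd : p₂ - p₁ ≠ 0) :
    ℓ p₁ p₂ = Real.log (p₁ + p₂) - Real.log (p₂ - p₁) := by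
  rw [ℓ, Real.log_div hs hd, add_comm p₂ p₁]

theorem ℓ_pos {p₁ p₂ : ℝ} (h1 : 0 < p₁) (h12 : p₁ < p₂) : 0 < ℓ p₁ p₂ :=
  Real.log_pos <| (one_lt_div (sub_pos.2 h12)).2 (by linarith)

theorem θ_eq_neg_mul_of_θ_eq {p₁ p₂ x t : ℝ} (hp : p₁ ≠ p₂) (h : θ p₁ x t = θ p₂ x t) :
    θ p₁ x t = -(p₁ * p₂ * (p₁ + p₂) * t) := by
  have hx : x = -((p₁ ^ 2 + p₁ * p₂ + p₂ ^ 2) * t) := by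
    apply mul_left_cancel₀ (sub_ne_zero.2 hp)
    unfold θ at h
    linear_combination h
  rw [θ, hx]
  ring

section PhaseDifferences

variable (p₁ p₂ x t : ℝ)

theorem Θmp_sub_Θpm : Θmp p₁ p₂ x t - Θpm p₁ p₂ x t = 2 * (θ p₂ x t - θ p₁ x t) := by
  unfold Θmp Θpm
  ring

theorem Θpp_sub_Θmm : Θpp p₁ p₂ x t - Θmm p₁ p₂ x t = 2 * (θ p₁ x t + θ p₂ x t) := by
  unfold Θpp Θmm
  ring

variable {p₁ p₂}

theorem Θpp_sub_Θmp (hs : p₂ + p₁ ≠ 0) (hd : p₂ - p₁ ≠ 0) :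
    Θpp p₁ p₂ x t - Θmp p₁ p₂ x t = 2 * θ p₁ x t - ℓ p₁ p₂ := by
  rw [ℓ_eq_log_sub_log hs hd]
  unfold Θpp Θmp
  ring

theorem Θpm_sub_Θmm (hs : p₂ + p₁ ≠ 0) (hd : p₂ - p₁ ≠ 0) :
    Θpm p₁ p₂ x t - Θmm p₁ p₂ x t = 2 * θ p₁ x t + ℓ p₁ p₂ := by
  rw [ℓ_eq_log_sub_log hs hd]
  unfold Θpm Θmm
  ring

end PhaseDifferences

theorem time_eq_of_θ_eq {p₁ p₂ x t c : ℝ} (h1 : 0 < p₁) (h12 : p₁ < p₂)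
    (hθ : θ p₁ x t = θ p₂ x t) (hc : 2 * θ p₁ x t = c) :
    t = -c / (2 * p₁ * p₂ * (p₂ + p₁)) := by
  have hθ₁ := θ_eq_neg_mul_of_θ_eq h12.ne hθ
  rw [eq_div_iff (by nlinarith [mul_pos h1 (h1.trans h12)])]
  linear_combination (-1 : ℝ) * hc + 2 * hθ₁

theorem visible_triple_events (p₁ p₂ : ℝ) (h1 : 0 < p₁) (h12 : p₁ < p₂) :
    (∀ x t : ℝ, Θpm p₁ p₂ x t = Θmp p₁ p₂ x t → Θmp p₁ p₂ x t = Θpp p₁ p₂ x t →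
        t = -(ℓ p₁ p₂) / (2*p₁*p₂*(p₂ + p₁))
        ∧ Θpp p₁ p₂ x t - Θmm p₁ p₂ x t = 2 * ℓ p₁ p₂
        ∧ 0 < 2 * ℓ p₁ p₂)
    ∧ (∀ x t : ℝ, Θmm p₁ p₂ x t = Θpm p₁ p₂ x t → Θpm p₁ p₂ x t = Θmp p₁ p₂ x t →
        t = ℓ p₁ p₂ / (2*p₁*p₂*(p₂ + p₁))
        ∧ Θmm p₁ p₂ x t - Θpp p₁ p₂ x t = 2 * ℓ p₁ p₂
        ∧ 0 < 2 * ℓ p₁ p₂) := by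
  have hs : p₂ + p₁ ≠ 0 := by linarith
  have hd : p₂ - p₁ ≠ 0 := sub_ne_zero.2 h12.ne'
  have hℓ : 0 < 2 * ℓ p₁ p₂ := by linarith [ℓ_pos h1 h12]
  constructor
  · intro x t hA hB
    have hθ : θ p₁ x t = θ p₂ x t := by linarith [Θmp_sub_Θpm p₁ p₂ x t]
    have hc : 2 * θ p₁ x t = ℓ p₁ p₂ := by linarith [Θpp_sub_Θmp x t hs hd]
    exact ⟨time_eq_of_θ_eq h1 h12 hθ hc, by linarith [Θpp_sub_Θmm p₁ p₂ x t], hℓ⟩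
  · intro x t hA hB
    have hθ : θ p₁ x t = θ p₂ x t := by linarith [Θmp_sub_Θpm p₁ p₂ x t]
    have hc : 2 * θ p₁ x t = -ℓ p₁ p₂ := by linarith [Θpm_sub_Θmm x t hs hd]
    refine ⟨?_, by linarith [Θpp_sub_Θmm p₁ p₂ x t], hℓ⟩
    simpa only [neg_neg] using time_eq_of_θ_eq h1 h12 hθ hc
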